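/- arXiv:1809.02751 — 7 statements merged into one kernel-verified Lean document; each statement's English description precedes it below -/
import Mathlib

section
/- With μ a regular bimultiplication law covering a coupling and h a hindrance (ε∘h = R^μ), the trilinear map f(a1⊗a2⊗a3) := a1·h(a2⊗a3) − h(a1a2⊗a3) + h(a1⊗a2a3) − h(a1⊗a2)·a3 takes values in the biannihilator Anni(K), i.e., f(a1⊗a2⊗a3)·k = 0 and k·f(a1⊗a2⊗a3) = 0 for all k ∈ K. -/
/-!
Multiplied by `k` on the right, each of the four terms of the cochain becomes, through the
bimultiplication identities and the curvature equation `h(a,b)·x = a·(b·x) − (ab)·x`, a difference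
of two iterated actions of `A` on `k`; associativity of `A` makes the eight of them cancel in pairs.
Multiplication on the left is the mirror image, with the right actions `v`.
-/

/-- A bimultiplication of a (possibly non-unital) associative `F`-algebra `K`. -/
def IsBimul (F : Type*) {K : Type*} [Field F] [NonUnitalRing K] [Module F K]
    [SMulCommClass F K K] [IsScalarTower F K K] (u v : K →ₗ[F] K) : Prop :=
  (∀ k1 k2 : K, k1 * u k2 = v k1 * k2) ∧
  (∀ k1 k2 : K, u (k1 * k2) = u k1 * k2) ∧
  (∀ k1 k2 : K, v (k1 * k2) = k1 * v k2)

lemma mul_eq_sub_apply_of_sub_eq_mulLeft {R K : Type*} [CommSemiring R] [NonUnitalRing K]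
    [Module R K] [SMulCommClass R K K] {f g : K →ₗ[R] K} {c : K}
    (hc : f - g = LinearMap.mulLeft R c) (x : K) : c * x = f x - g x := by
  simpa using (LinearMap.congr_fun hc x).symm

lemma mul_eq_sub_apply_of_sub_eq_mulRight {R K : Type*} [CommSemiring R] [NonUnitalRing K]
    [Module R K] [IsScalarTower R K K] {f g : K →ₗ[R] K} {c : K}
    (hc : f - g = LinearMap.mulRight R c) (x : K) : x * c = f x - g x := by
  simpa using (LinearMap.congr_fun hc x).symm

def obstructionCochain {R A K : Type*} [CommSemiring R] [NonUnitalRing A] [Module R A]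
    [NonUnitalRing K] [Module R K] (u v : A →ₗ[R] K →ₗ[R] K) (h : A →ₗ[R] A →ₗ[R] K)
    (a1 a2 a3 : A) : K :=
  u a1 (h a2 a3) - h (a1 * a2) a3 + h a1 (a2 * a3) - v a3 (h a1 a2)

section ObstructionCochain

variable {F A K : Type*} [Field F] [NonUnitalRing A] [Module F A]
  [NonUnitalRing K] [Module F K] [SMulCommClass F K K] [IsScalarTower F K K]
  {u v : A →ₗ[F] K →ₗ[F] K} {h : A →ₗ[F] A →ₗ[F] K}

theorem obstructionCochain_mul (hbim : ∀ a : A, IsBimul F (u a) (v a))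
    (hcurv : ∀ a1 a2 : A, u a1 ∘ₗ u a2 - u (a1 * a2) = LinearMap.mulLeft F (h a1 a2))
    (a1 a2 a3 : A) (k : K) : obstructionCochain u v h a1 a2 a3 * k = 0 := by
  have hL (a b : A) (x : K) : h a b * x = u a (u b x) - u (a * b) x :=
    mul_eq_sub_apply_of_sub_eq_mulLeft (hcurv a b) x
  have h_first : u a1 (h a2 a3) * k = u a1 (u a2 (u a3 k)) - u a1 (u (a2 * a3) k) := by
    rw [← (hbim a1).2.1, hL, map_sub]
  have h_last : v a3 (h a1 a2) * k = u a1 (u a2 (u a3 k)) - u (a1 * a2) (u a3 k) := by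
    rw [← (hbim a3).1, hL]
  rw [obstructionCochain, sub_mul, add_mul, sub_mul, h_first, h_last, hL, hL, mul_assoc]
  abel

theorem mul_obstructionCochain (hbim : ∀ a : A, IsBimul F (u a) (v a))
    (hcurv : ∀ a1 a2 : A, v a2 ∘ₗ v a1 - v (a1 * a2) = LinearMap.mulRight F (h a1 a2))
    (a1 a2 a3 : A) (k : K) : k * obstructionCochain u v h a1 a2 a3 = 0 := by
  have hR (a b : A) (x : K) : x * h a b = v b (v a x) - v (a * b) x :=
    mul_eq_sub_apply_of_sub_eq_mulRight (hcurv a b) x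
  have h_first : k * u a1 (h a2 a3) = v a3 (v a2 (v a1 k)) - v (a2 * a3) (v a1 k) := by
    rw [(hbim a1).1, hR]
  have h_last : k * v a3 (h a1 a2) = v a3 (v a2 (v a1 k)) - v a3 (v (a1 * a2) k) := by
    rw [← (hbim a3).2.2, hR, map_sub]
  rw [obstructionCochain, mul_sub, mul_add, mul_sub, h_first, h_last, hR, hR, mul_assoc]
  abel

end ObstructionCochain

theorem obstruction_cochain_valued_in_biannihilator_general
    (F A K : Type*) [Field F]
    [NonUnitalRing A] [Module F A]
    [NonUnitalRing K] [Module F K] [SMulCommClass F K K] [IsScalarTower F K K]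
    (u v : A →ₗ[F] (K →ₗ[F] K))
    (hbim : ∀ a : A, IsBimul F (u a) (v a))
    (h : A →ₗ[F] A →ₗ[F] K)
    (hcurv : ∀ a1 a2 : A,
      u a1 ∘ₗ u a2 - u (a1 * a2) = LinearMap.mulLeft F (h a1 a2) ∧
      v a2 ∘ₗ v a1 - v (a1 * a2) = LinearMap.mulRight F (h a1 a2)) :
    ∀ (a1 a2 a3 : A) (k : K),
      (u a1 (h a2 a3) - h (a1 * a2) a3 + h a1 (a2 * a3) - v a3 (h a1 a2)) * k = 0 ∧
      k * (u a1 (h a2 a3) - h (a1 * a2) a3 + h a1 (a2 * a3) - v a3 (h a1 a2)) = 0 :=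
  fun a1 a2 a3 k =>
    ⟨obstructionCochain_mul hbim (fun a b => (hcurv a b).1) a1 a2 a3 k,
      mul_obstructionCochain hbim (fun a b => (hcurv a b).2) a1 a2 a3 k⟩

/-- With `μ = (u,v)` a regular bimultiplication law (pairwise permutable images)
whose curvature is inner, produced by a hindrance `h` (`ε ∘ h = R^μ`), the
trilinear map
`f(a₁⊗a₂⊗a₃) = a₁·h(a₂⊗a₃) − h(a₁a₂⊗a₃) + h(a₁⊗a₂a₃) − h(a₁⊗a₂)·a₃`
takes values in the biannihilator: `f(a₁⊗a₂⊗a₃) * k = 0` and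
`k * f(a₁⊗a₂⊗a₃) = 0` for all `k ∈ K`. -/
theorem obstruction_cochain_valued_in_biannihilator
    (F A K : Type*) [Field F]
    [NonUnitalRing A] [Module F A] [SMulCommClass F A A] [IsScalarTower F A A]
    [NonUnitalRing K] [Module F K] [SMulCommClass F K K] [IsScalarTower F K K]
    (u v : A →ₗ[F] (K →ₗ[F] K))
    (hbim : ∀ a : A, IsBimul F (u a) (v a))
    (hreg : ∀ a1 a2 : A, u a1 ∘ₗ v a2 = v a2 ∘ₗ u a1)
    (h : A →ₗ[F] A →ₗ[F] K)
    (hcurv : ∀ a1 a2 : A,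
      u a1 ∘ₗ u a2 - u (a1 * a2) = LinearMap.mulLeft F (h a1 a2) ∧
      v a2 ∘ₗ v a1 - v (a1 * a2) = LinearMap.mulRight F (h a1 a2)) :
    ∀ (a1 a2 a3 : A) (k : K),
      (u a1 (h a2 a3) - h (a1 * a2) a3 + h a1 (a2 * a3) - v a3 (h a1 a2)) * k = 0 ∧
      k * (u a1 (h a2 a3) - h (a1 * a2) a3 + h a1 (a2 * a3) - v a3 (h a1 a2)) = 0 :=
  obstruction_cochain_valued_in_biannihilator_general F A K u v hbim h hcurv
end

section
/- The trilinear cochain f = Δ^μ h associated to a bimultiplication law μ covering a coupling with hindrance h is a Hochschild 3-cocycle: its Hochschild coboundary with respect to the induced bimodule structure on Anni(K) vanishes, i.e., a1·f(a2⊗a3⊗a4) − f(a1a2⊗a3⊗a4) + f(a1⊗a2a3⊗a4) − f(a1⊗a2⊗a3a4) + f(a1⊗a2⊗a3)·a4 = 0. -/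
/-- The cochain `f = Δ^μ h` associated to a regular bimultiplication law
`μ = (u,v)` with hindrance `h` is a Hochschild 3-cocycle: its Hochschild
coboundary with respect to the actions `a·m = u_a m`, `m·a = v_a m` vanishes:
`a₁·f(a₂⊗a₃⊗a₄) − f(a₁a₂⊗a₃⊗a₄) + f(a₁⊗a₂a₃⊗a₄) − f(a₁⊗a₂⊗a₃a₄) + f(a₁⊗a₂⊗a₃)·a₄ = 0`. -/
theorem obstruction_is_three_cocycle
    (F A K : Type*) [Field F]
    [NonUnitalRing A] [Module F A] [SMulCommClass F A A] [IsScalarTower F A A]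
    [NonUnitalRing K] [Module F K] [SMulCommClass F K K] [IsScalarTower F K K]
    (u v : A →ₗ[F] (K →ₗ[F] K))
    (hbim : ∀ a : A, IsBimul F (u a) (v a))
    (hreg : ∀ a1 a2 : A, u a1 ∘ₗ v a2 = v a2 ∘ₗ u a1)
    (h : A →ₗ[F] A →ₗ[F] K)
    (hcurv : ∀ a1 a2 : A,
      u a1 ∘ₗ u a2 - u (a1 * a2) = LinearMap.mulLeft F (h a1 a2) ∧
      v a2 ∘ₗ v a1 - v (a1 * a2) = LinearMap.mulRight F (h a1 a2)) :
    let f : A → A → A → K := fun a1 a2 a3 =>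
      u a1 (h a2 a3) - h (a1 * a2) a3 + h a1 (a2 * a3) - v a3 (h a1 a2)
    ∀ a1 a2 a3 a4 : A,
      u a1 (f a2 a3 a4) - f (a1 * a2) a3 a4 + f a1 (a2 * a3) a4
        - f a1 a2 (a3 * a4) + v a4 (f a1 a2 a3) = 0 := by
  intro f a1 a2 a3 a4
  have huu : ∀ a b : A, ∀ k : K, u a (u b k) = u (a * b) k + h a b * k := by
    intro a b k
    have := congrArg (fun g : K →ₗ[F] K => g k) (hcurv a b).1
    simpa [LinearMap.sub_apply, sub_eq_iff_eq_add'] using this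
  have hvv : ∀ a b : A, ∀ k : K, v b (v a k) = v (a * b) k + k * h a b := by
    intro a b k
    have := congrArg (fun g : K →ₗ[F] K => g k) (hcurv a b).2
    simpa [LinearMap.sub_apply, sub_eq_iff_eq_add'] using this
  have huv : ∀ a b : A, ∀ k : K, u a (v b k) = v b (u a k) := by
    intro a b k
    exact congrArg (fun g : K →ₗ[F] K => g k) (hreg a b)
  simp only [f, map_sub, map_add]
  rw [huu, hvv, huv]
  rw [mul_assoc a1 a2 a3, mul_assoc a2 a3 a4]
  abel
end

section
/- If h and h' are two hindrances for the same bimultiplication law μ (i.e., ε∘h = R^μ = ε∘h'), then h − h' takes values in Anni(K), and the associated 3-cocycles satisfy f(μ,h) − f(μ,h') = δg where g: A⊗A → Anni(K) is given by h − h' and δ is the Hochschild coboundary of the induced A-bimodule structure on Anni(K). -/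
/-- If `h` and `h'` are two hindrances for the same bimultiplication law `μ`
(`ε∘h = R^μ = ε∘h'`), then `g := h − h'` takes values in the biannihilator
`Anni(K)`, and the associated 3-cocycles differ by the Hochschild coboundary of
`g` (for the induced `A`-bimodule structure `a·m = u_a m`, `m·a = v_a m`):
`f(μ,h) − f(μ,h') = δg`. -/
theorem hindrance_change_cocycle_cohomologous
    (F A K : Type*) [Field F]
    [NonUnitalRing A] [Module F A] [SMulCommClass F A A] [IsScalarTower F A A]
    [NonUnitalRing K] [Module F K] [SMulCommClass F K K] [IsScalarTower F K K]
    (u v : A →ₗ[F] (K →ₗ[F] K))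
    (hbim : ∀ a : A, IsBimul F (u a) (v a))
    (hreg : ∀ a1 a2 : A, u a1 ∘ₗ v a2 = v a2 ∘ₗ u a1)
    (h h' : A →ₗ[F] A →ₗ[F] K)
    (hcurv : ∀ a1 a2 : A,
      u a1 ∘ₗ u a2 - u (a1 * a2) = LinearMap.mulLeft F (h a1 a2) ∧
      v a2 ∘ₗ v a1 - v (a1 * a2) = LinearMap.mulRight F (h a1 a2))
    (hcurv' : ∀ a1 a2 : A,
      u a1 ∘ₗ u a2 - u (a1 * a2) = LinearMap.mulLeft F (h' a1 a2) ∧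
      v a2 ∘ₗ v a1 - v (a1 * a2) = LinearMap.mulRight F (h' a1 a2)) :
    let g : A → A → K := fun a1 a2 => h a1 a2 - h' a1 a2
    let f : A → A → A → K := fun a1 a2 a3 =>
      u a1 (h a2 a3) - h (a1 * a2) a3 + h a1 (a2 * a3) - v a3 (h a1 a2)
    let f' : A → A → A → K := fun a1 a2 a3 =>
      u a1 (h' a2 a3) - h' (a1 * a2) a3 + h' a1 (a2 * a3) - v a3 (h' a1 a2)
    -- g takes values in the biannihilator
    (∀ (a1 a2 : A) (k : K), g a1 a2 * k = 0 ∧ k * g a1 a2 = 0) ∧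
    -- f(μ,h) − f(μ,h') = δg
    (∀ a1 a2 a3 : A,
      f a1 a2 a3 - f' a1 a2 a3 =
        u a1 (g a2 a3) - g (a1 * a2) a3 + g a1 (a2 * a3) - v a3 (g a1 a2)) := by
  intro g f f'
  constructor
  · intro a1 a2 k
    constructor
    · have := congrArg (fun L => L k) ((hcurv a1 a2).1.symm.trans (hcurv' a1 a2).1)
      simp only [LinearMap.mulLeft_apply] at this
      simp only [g, sub_mul, this, sub_self]
    · have := congrArg (fun L => L k) ((hcurv a1 a2).2.symm.trans (hcurv' a1 a2).2)
      simp only [LinearMap.mulRight_apply] at this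
      simp only [g, mul_sub, this, sub_self]
  · intro a1 a2 a3
    simp only [f, f', g, map_sub]
    abel
end

section
/- If μ and μ' are two bimultiplication laws covering the same coupling ξ, then μ' = μ + ε∘l for some linear map l: A → K, and their curvatures satisfy R^{μ'} − R^μ = ε∘(Δ^μ(l) + l·l), where Δ^μ(l)(a1⊗a2) = a1·l(a2) − l(a1a2) + l(a1)·a2 and (l·l)(a1⊗a2) = l(a1)l(a2). -/
theorem LinearMap.exists_comp_eq_of_forall_mem_range {R P M N : Type*} [Semiring R]
    [AddCommMonoid P] [Module R P] [Module.Projective R P]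
    [AddCommMonoid M] [Module R M] [AddCommMonoid N] [Module R N]
    (f : M →ₗ[R] N) (g : P →ₗ[R] N) (hg : ∀ p, g p ∈ LinearMap.range f) :
    ∃ h : P →ₗ[R] M, f ∘ₗ h = g := by
  obtain ⟨h, hh⟩ := Module.projective_lifting_property f.rangeRestrict (g.codRestrict _ hg)
    f.surjective_rangeRestrict
  exact ⟨h, LinearMap.ext fun p => congr_arg Subtype.val (LinearMap.congr_fun hh p)⟩

section Bimultiplication

variable {F K : Type*} [Field F] [NonUnitalRing K] [Module F K]
  [SMulCommClass F K K] [IsScalarTower F K K]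

variable (F K) in
def innerBimul : K →ₗ[F] (K →ₗ[F] K) × (K →ₗ[F] K) :=
  (LinearMap.mul F K).prod (LinearMap.mul F K).flip

@[simp]
theorem innerBimul_apply (k : K) :
    innerBimul F K k = (LinearMap.mulLeft F k, LinearMap.mulRight F k) :=
  rfl

theorem exists_linearMap_eq_add_inner {A : Type*} [AddCommGroup A] [Module F A]
    (u v u' v' : A →ₗ[F] (K →ₗ[F] K))
    (hsame : ∀ a : A, ∃ k : K,
      u' a = u a + LinearMap.mulLeft F k ∧ v' a = v a + LinearMap.mulRight F k) :
    ∃ l : A →ₗ[F] K, ∀ a : A,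
      u' a = u a + LinearMap.mulLeft F (l a) ∧ v' a = v a + LinearMap.mulRight F (l a) := by
  obtain ⟨l, hl⟩ := LinearMap.exists_comp_eq_of_forall_mem_range
    (innerBimul F K) ((u' - u).prod (v' - v)) fun a => by
      obtain ⟨k, hu, hv⟩ := hsame a
      exact ⟨k, by simp [hu, hv]⟩
  refine ⟨l, fun a => ?_⟩
  have h := LinearMap.congr_fun hl a
  simp only [LinearMap.comp_apply, innerBimul_apply, LinearMap.prod_apply, Function.prod,
    Prod.mk.injEq, LinearMap.sub_apply] at h
  exact ⟨eq_add_of_sub_eq' h.1.symm, eq_add_of_sub_eq' h.2.symm⟩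

theorem IsBimul.comp_add_mulLeft {u₁ v₁ u₂ v₂ : K →ₗ[F] K}
    (h₁ : IsBimul F u₁ v₁) (h₂ : IsBimul F u₂ v₂) (k₁ k₂ : K) :
    (u₁ + LinearMap.mulLeft F k₁) ∘ₗ (u₂ + LinearMap.mulLeft F k₂) =
      u₁ ∘ₗ u₂ + LinearMap.mulLeft F (u₁ k₂ + v₂ k₁ + k₁ * k₂) := by
  ext x
  simp only [LinearMap.comp_apply, LinearMap.add_apply, LinearMap.mulLeft_apply, map_add,
    h₁.2.1, h₂.1]
  noncomm_ring

theorem IsBimul.comp_add_mulRight {u₁ v₁ u₂ v₂ : K →ₗ[F] K}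
    (h₁ : IsBimul F u₁ v₁) (h₂ : IsBimul F u₂ v₂) (k₁ k₂ : K) :
    (v₂ + LinearMap.mulRight F k₂) ∘ₗ (v₁ + LinearMap.mulRight F k₁) =
      v₂ ∘ₗ v₁ + LinearMap.mulRight F (u₁ k₂ + v₂ k₁ + k₁ * k₂) := by
  ext x
  simp only [LinearMap.comp_apply, LinearMap.add_apply, LinearMap.mulRight_apply, map_add,
    h₂.2.2, ← h₁.1]
  noncomm_ring

end Bimultiplication

theorem laws_differ_by_inner_general
    (F A K : Type*) [Field F]
    [NonUnitalRing A] [Module F A] [SMulCommClass F A A] [IsScalarTower F A A]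
    [NonUnitalRing K] [Module F K] [SMulCommClass F K K] [IsScalarTower F K K]
    (u v u' v' : A →ₗ[F] (K →ₗ[F] K))
    (hbim : ∀ a : A, IsBimul F (u a) (v a))
    (hsame : ∀ a : A, ∃ k : K,
      u' a = u a + LinearMap.mulLeft F k ∧ v' a = v a + LinearMap.mulRight F k) :
    ∃ l : A →ₗ[F] K,
      (∀ a : A, u' a = u a + LinearMap.mulLeft F (l a) ∧
        v' a = v a + LinearMap.mulRight F (l a)) ∧
      (∀ a1 a2 : A,
        (u' a1 ∘ₗ u' a2 - u' (a1 * a2)) - (u a1 ∘ₗ u a2 - u (a1 * a2)) =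
          LinearMap.mulLeft F
            ((u a1 (l a2) - l (a1 * a2) + v a2 (l a1)) + l a1 * l a2) ∧
        (v' a2 ∘ₗ v' a1 - v' (a1 * a2)) - (v a2 ∘ₗ v a1 - v (a1 * a2)) =
          LinearMap.mulRight F
            ((u a1 (l a2) - l (a1 * a2) + v a2 (l a1)) + l a1 * l a2)) := by
  obtain ⟨l, hl⟩ := exists_linearMap_eq_add_inner u v u' v' hsame
  refine ⟨l, hl, fun a1 a2 => ?_⟩
  obtain ⟨hu1, hv1⟩ := hl a1
  obtain ⟨hu2, hv2⟩ := hl a2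
  obtain ⟨hu12, hv12⟩ := hl (a1 * a2)
  rw [hu1, hu2, hu12, hv1, hv2, hv12, (hbim a1).comp_add_mulLeft (hbim a2),
    (hbim a1).comp_add_mulRight (hbim a2)]
  constructor <;> ext x <;> simp only [LinearMap.sub_apply, LinearMap.add_apply,
    LinearMap.mulLeft_apply, LinearMap.mulRight_apply] <;> noncomm_ring

/-- If `μ = (u,v)` and `μ' = (u',v')` are two bimultiplication laws covering
the same coupling `ξ` (i.e. `μ'(a) − μ(a)` is inner for every `a`), then
`μ' = μ + ε ∘ l` for some linear map `l : A → K`, and the curvatures satisfy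
`R^{μ'} − R^μ = ε ∘ (Δ^μ(l) + l·l)`, where
`Δ^μ(l)(a₁⊗a₂) = a₁·l(a₂) − l(a₁a₂) + l(a₁)·a₂` and
`(l·l)(a₁⊗a₂) = l(a₁)l(a₂)`. -/
theorem laws_differ_by_inner
    (F A K : Type*) [Field F]
    [NonUnitalRing A] [Module F A] [SMulCommClass F A A] [IsScalarTower F A A]
    [NonUnitalRing K] [Module F K] [SMulCommClass F K K] [IsScalarTower F K K]
    (u v u' v' : A →ₗ[F] (K →ₗ[F] K))
    (hbim : ∀ a : A, IsBimul F (u a) (v a))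
    (hbim' : ∀ a : A, IsBimul F (u' a) (v' a))
    (hsame : ∀ a : A, ∃ k : K,
      u' a = u a + LinearMap.mulLeft F k ∧ v' a = v a + LinearMap.mulRight F k) :
    ∃ l : A →ₗ[F] K,
      (∀ a : A, u' a = u a + LinearMap.mulLeft F (l a) ∧
        v' a = v a + LinearMap.mulRight F (l a)) ∧
      (∀ a1 a2 : A,
        (u' a1 ∘ₗ u' a2 - u' (a1 * a2)) - (u a1 ∘ₗ u a2 - u (a1 * a2)) =
          LinearMap.mulLeft F
            ((u a1 (l a2) - l (a1 * a2) + v a2 (l a1)) + l a1 * l a2) ∧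
        (v' a2 ∘ₗ v' a1 - v' (a1 * a2)) - (v a2 ∘ₗ v a1 - v (a1 * a2)) =
          LinearMap.mulRight F
            ((u a1 (l a2) - l (a1 * a2) + v a2 (l a1)) + l a1 * l a2)) :=
  laws_differ_by_inner_general F A K u v u' v' hbim hsame
end

section
/- Let μ be a bimultiplication law covering ξ with hindrance h, and let μ' = μ + ε∘l for a linear map l: A → K. Then h' := h + Δ^μ(l) + l·l is a hindrance for μ' (ε∘h' = R^{μ'}), and the obstruction cocycles coincide: f(μ', h') = f(μ, h). -/
/-!
The perturbation `μ' = μ + ε∘l` acts on the 2-cochain `h` by `h' = h + Δl + l∪l` and on the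
coboundary by `Δ' c = Δ c + l ∪ c - c ∪ l`.  Two identities make `Δ' h'` collapse to `Δ h`:
`Δ (Δ l) = h ∪ l - l ∪ h`, because the curvature of `μ` is inner with respect to `h`, and the
Leibniz rule `Δ (l ∪ l) = Δl ∪ l - l ∪ Δl`, which holds because each `μ a` is a bimultiplication.
-/

namespace IsBimul

variable {F K : Type*} [Field F] [NonUnitalRing K] [Module F K] [SMulCommClass F K K]
  [IsScalarTower F K K] {u v : K →ₗ[F] K}

theorem comp_mulLeft (hb : IsBimul F u v) (x : K) :
    u ∘ₗ LinearMap.mulLeft F x = LinearMap.mulLeft F (u x) :=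
  LinearMap.ext fun k => hb.2.1 x k

theorem mulLeft_comp (hb : IsBimul F u v) (x : K) :
    LinearMap.mulLeft F x ∘ₗ u = LinearMap.mulLeft F (v x) :=
  LinearMap.ext fun k => hb.1 x k

theorem comp_mulRight (hb : IsBimul F u v) (x : K) :
    v ∘ₗ LinearMap.mulRight F x = LinearMap.mulRight F (v x) :=
  LinearMap.ext fun k => hb.2.2 k x

theorem mulRight_comp (hb : IsBimul F u v) (x : K) :
    LinearMap.mulRight F x ∘ₗ v = LinearMap.mulRight F (u x) :=
  LinearMap.ext fun k => (hb.1 k x).symm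

end IsBimul

namespace BimulLaw

section Cochains

variable {R A K : Type*} [CommSemiring R] [NonUnitalRing K] [Module R K]

/-- `Δ^μ` on 1-cochains, for `μ = (u, v)`. -/
def coboundary₁ [Mul A] (u v : A → K →ₗ[R] K) (l : A → K) (a1 a2 : A) : K :=
  u a1 (l a2) - l (a1 * a2) + v a2 (l a1)

/-- `Δ^μ` on 2-cochains, for `μ = (u, v)`. -/
def coboundary₂ [Mul A] (u v : A → K →ₗ[R] K) (c : A → A → K) (a1 a2 a3 : A) : K :=
  u a1 (c a2 a3) - c (a1 * a2) a3 + c a1 (a2 * a3) - v a3 (c a1 a2)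

/-- `ε ∘ h = R^μ` for `μ = (u, v)`. -/
def IsHindrance [Mul A] [SMulCommClass R K K] [IsScalarTower R K K]
    (u v : A → K →ₗ[R] K) (h : A → A → K) : Prop :=
  ∀ a1 a2 : A,
    u a1 ∘ₗ u a2 - u (a1 * a2) = LinearMap.mulLeft R (h a1 a2) ∧
    v a2 ∘ₗ v a1 - v (a1 * a2) = LinearMap.mulRight R (h a1 a2)

theorem coboundary₂_add [Mul A] (u v : A → K →ₗ[R] K) (c d : A → A → K) :
    coboundary₂ u v (c + d) = coboundary₂ u v c + coboundary₂ u v d := by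
  ext a1 a2 a3
  simp only [coboundary₂, Pi.add_apply, map_add]
  abel

theorem coboundary₂_perturb [Mul A] [SMulCommClass R K K] [IsScalarTower R K K]
    (u v : A → K →ₗ[R] K) (l : A → K) (c : A → A → K) (a1 a2 a3 : A) :
    coboundary₂ (fun a => u a + LinearMap.mulLeft R (l a))
        (fun a => v a + LinearMap.mulRight R (l a)) c a1 a2 a3 =
      coboundary₂ u v c a1 a2 a3 + l a1 * c a2 a3 - c a1 a2 * l a3 := by
  simp only [coboundary₂, LinearMap.add_apply, LinearMap.mulLeft_apply,
    LinearMap.mulRight_apply]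
  abel

namespace IsHindrance

variable [SMulCommClass R K K] [IsScalarTower R K K]
  {u v : A → K →ₗ[R] K} {h : A → A → K}

theorem comp_left [Mul A] (hh : IsHindrance u v h) (a1 a2 : A) :
    u a1 ∘ₗ u a2 = u (a1 * a2) + LinearMap.mulLeft R (h a1 a2) :=
  sub_eq_iff_eq_add'.mp (hh a1 a2).1

theorem comp_right [Mul A] (hh : IsHindrance u v h) (a1 a2 : A) :
    v a2 ∘ₗ v a1 = v (a1 * a2) + LinearMap.mulRight R (h a1 a2) :=
  sub_eq_iff_eq_add'.mp (hh a1 a2).2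

theorem apply_left [Mul A] (hh : IsHindrance u v h) (a1 a2 : A) (k : K) :
    u a1 (u a2 k) = u (a1 * a2) k + h a1 a2 * k :=
  LinearMap.congr_fun (hh.comp_left a1 a2) k

theorem apply_right [Mul A] (hh : IsHindrance u v h) (a1 a2 : A) (k : K) :
    v a2 (v a1 k) = v (a1 * a2) k + k * h a1 a2 :=
  LinearMap.congr_fun (hh.comp_right a1 a2) k

theorem coboundary₂_coboundary₁ [Semigroup A] (hh : IsHindrance u v h)
    (hreg : ∀ a1 a2 : A, u a1 ∘ₗ v a2 = v a2 ∘ₗ u a1) (l : A → K) (a1 a2 a3 : A) :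
    coboundary₂ u v (coboundary₁ u v l) a1 a2 a3 = h a1 a2 * l a3 - l a1 * h a2 a3 := by
  have hcomm : u a1 (v a3 (l a2)) = v a3 (u a1 (l a2)) := LinearMap.congr_fun (hreg a1 a3) _
  simp only [coboundary₂, coboundary₁, map_add, map_sub, hh.apply_left, hh.apply_right,
    hcomm, mul_assoc]
  abel

end IsHindrance

end Cochains

section Bimultiplication

variable {F A K : Type*} [Field F] [NonUnitalRing K] [Module F K]
  [SMulCommClass F K K] [IsScalarTower F K K] {u v : A → K →ₗ[F] K}

theorem coboundary₂_mul_self [Mul A] (hbim : ∀ a : A, IsBimul F (u a) (v a)) (l : A → K)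
    (a1 a2 a3 : A) :
    coboundary₂ u v (fun b1 b2 => l b1 * l b2) a1 a2 a3 =
      coboundary₁ u v l a1 a2 * l a3 - l a1 * coboundary₁ u v l a2 a3 := by
  simp only [coboundary₂, coboundary₁, (hbim a1).2.1, (hbim a3).2.2, add_mul, sub_mul,
    mul_add, mul_sub, (hbim a2).1]
  abel

namespace IsHindrance

variable {h : A → A → K}

theorem perturb [Mul A] (hh : IsHindrance u v h) (hbim : ∀ a : A, IsBimul F (u a) (v a))
    (l : A → K) :
    IsHindrance (fun a => u a + LinearMap.mulLeft F (l a))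
      (fun a => v a + LinearMap.mulRight F (l a))
      (h + coboundary₁ u v l + fun a1 a2 => l a1 * l a2) := by
  intro a1 a2
  constructor
  · rw [LinearMap.comp_add, LinearMap.add_comp, LinearMap.add_comp, hh.comp_left,
      (hbim a1).comp_mulLeft, (hbim a2).mulLeft_comp, ← LinearMap.mulLeft_mul]
    ext k
    simp only [coboundary₁, LinearMap.sub_apply, LinearMap.add_apply, LinearMap.mulLeft_apply,
      Pi.add_apply, add_mul, sub_mul]
    abel
  · rw [LinearMap.comp_add, LinearMap.add_comp, LinearMap.add_comp, hh.comp_right,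
      (hbim a2).comp_mulRight, (hbim a1).mulRight_comp, ← LinearMap.mulRight_mul]
    ext k
    simp only [coboundary₁, LinearMap.sub_apply, LinearMap.add_apply, LinearMap.mulRight_apply,
      Pi.add_apply, mul_add, mul_sub]
    abel

theorem coboundary₂_perturb_eq_coboundary₂ [Semigroup A] (hh : IsHindrance u v h)
    (hbim : ∀ a : A, IsBimul F (u a) (v a))
    (hreg : ∀ a1 a2 : A, u a1 ∘ₗ v a2 = v a2 ∘ₗ u a1) (l : A → K) (a1 a2 a3 : A) :
    coboundary₂ (fun a => u a + LinearMap.mulLeft F (l a))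
        (fun a => v a + LinearMap.mulRight F (l a))
        (h + coboundary₁ u v l + fun b1 b2 => l b1 * l b2) a1 a2 a3 =
      coboundary₂ u v h a1 a2 a3 := by
  rw [coboundary₂_perturb, coboundary₂_add, coboundary₂_add]
  simp only [Pi.add_apply]
  rw [hh.coboundary₂_coboundary₁ hreg, coboundary₂_mul_self hbim]
  simp only [mul_add, add_mul, mul_assoc]
  abel

end IsHindrance

end Bimultiplication

end BimulLaw

theorem modified_hindrance_same_cocycle_general
    (F A K : Type*) [Field F]
    [NonUnitalRing A] [Module F A]
    [NonUnitalRing K] [Module F K] [SMulCommClass F K K] [IsScalarTower F K K]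
    (u v : A →ₗ[F] (K →ₗ[F] K))
    (hbim : ∀ a : A, IsBimul F (u a) (v a))
    (hreg : ∀ a1 a2 : A, u a1 ∘ₗ v a2 = v a2 ∘ₗ u a1)
    (h : A →ₗ[F] A →ₗ[F] K)
    (hcurv : ∀ a1 a2 : A,
      u a1 ∘ₗ u a2 - u (a1 * a2) = LinearMap.mulLeft F (h a1 a2) ∧
      v a2 ∘ₗ v a1 - v (a1 * a2) = LinearMap.mulRight F (h a1 a2))
    (l : A →ₗ[F] K) :
    let u' : A → K →ₗ[F] K := fun a => u a + LinearMap.mulLeft F (l a)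
    let v' : A → K →ₗ[F] K := fun a => v a + LinearMap.mulRight F (l a)
    let h' : A → A → K := fun a1 a2 =>
      h a1 a2 + (u a1 (l a2) - l (a1 * a2) + v a2 (l a1)) + l a1 * l a2
    -- h' is a hindrance for μ' = μ + ε∘l
    (∀ a1 a2 : A,
      u' a1 ∘ₗ u' a2 - u' (a1 * a2) = LinearMap.mulLeft F (h' a1 a2) ∧
      v' a2 ∘ₗ v' a1 - v' (a1 * a2) = LinearMap.mulRight F (h' a1 a2)) ∧
    -- f(μ', h') = f(μ, h)
    (∀ a1 a2 a3 : A,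
      u' a1 (h' a2 a3) - h' (a1 * a2) a3 + h' a1 (a2 * a3) - v' a3 (h' a1 a2) =
      u a1 (h a2 a3) - h (a1 * a2) a3 + h a1 (a2 * a3) - v a3 (h a1 a2)) := by
  intro u' v' h'
  exact ⟨BimulLaw.IsHindrance.perturb hcurv hbim l,
    BimulLaw.IsHindrance.coboundary₂_perturb_eq_coboundary₂ hcurv hbim hreg l⟩

/-- Let `μ = (u,v)` be a regular bimultiplication law with hindrance `h`
(`ε∘h = R^μ`), and let `μ' = μ + ε∘l` for a linear `l : A → K`.  Then
`h' := h + Δ^μ(l) + l·l` is a hindrance for `μ'` (`ε∘h' = R^{μ'}`), and the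
obstruction cocycles coincide: `f(μ', h') = f(μ, h)`. -/
theorem modified_hindrance_same_cocycle
    (F A K : Type*) [Field F]
    [NonUnitalRing A] [Module F A] [SMulCommClass F A A] [IsScalarTower F A A]
    [NonUnitalRing K] [Module F K] [SMulCommClass F K K] [IsScalarTower F K K]
    (u v : A →ₗ[F] (K →ₗ[F] K))
    (hbim : ∀ a : A, IsBimul F (u a) (v a))
    (hreg : ∀ a1 a2 : A, u a1 ∘ₗ v a2 = v a2 ∘ₗ u a1)
    (h : A →ₗ[F] A →ₗ[F] K)
    (hcurv : ∀ a1 a2 : A,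
      u a1 ∘ₗ u a2 - u (a1 * a2) = LinearMap.mulLeft F (h a1 a2) ∧
      v a2 ∘ₗ v a1 - v (a1 * a2) = LinearMap.mulRight F (h a1 a2))
    (l : A →ₗ[F] K) :
    let u' : A → K →ₗ[F] K := fun a => u a + LinearMap.mulLeft F (l a)
    let v' : A → K →ₗ[F] K := fun a => v a + LinearMap.mulRight F (l a)
    let h' : A → A → K := fun a1 a2 =>
      h a1 a2 + (u a1 (l a2) - l (a1 * a2) + v a2 (l a1)) + l a1 * l a2
    -- h' is a hindrance for μ' = μ + ε∘l
    (∀ a1 a2 : A,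
      u' a1 ∘ₗ u' a2 - u' (a1 * a2) = LinearMap.mulLeft F (h' a1 a2) ∧
      v' a2 ∘ₗ v' a1 - v' (a1 * a2) = LinearMap.mulRight F (h' a1 a2)) ∧
    -- f(μ', h') = f(μ, h)
    (∀ a1 a2 a3 : A,
      u' a1 (h' a2 a3) - h' (a1 * a2) a3 + h' a1 (a2 * a3) - v' a3 (h' a1 a2) =
      u a1 (h a2 a3) - h (a1 * a2) a3 + h a1 (a2 * a3) - v a3 (h a1 a2)) :=
  modified_hindrance_same_cocycle_general F A K u v hbim hreg h hcurv l
end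

section
/- Given a bimultiplication law μ covering ξ with hindrance h and cochain f = f(μ,h) vanishing (f = 0), the vector space A ⊕ K with multiplication (a1,k1)(a2,k2) = (a1a2, a1·k2 + k1·a2 + k1k2 + h(a1⊗a2)) is an associative algebra. -/
/-- Given a regular bimultiplication law `μ = (u,v)` with hindrance `h`
(satisfying `a₁·(a₂·k) − (a₁a₂)·k = h(a₁⊗a₂)k` and
`(k·a₁)·a₂ − k·(a₁a₂) = k·h(a₁⊗a₂)`) whose obstruction cochain `f(μ,h)`
vanishes, the vector space `A ⊕ K` with multiplication
`(a₁,k₁)(a₂,k₂) = (a₁a₂, a₁·k₂ + k₁·a₂ + k₁k₂ + h(a₁⊗a₂))`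
is an associative algebra. -/
theorem extension_multiplication_associative
    (F A K : Type*) [Field F]
    [NonUnitalRing A] [Module F A] [SMulCommClass F A A] [IsScalarTower F A A]
    [NonUnitalRing K] [Module F K] [SMulCommClass F K K] [IsScalarTower F K K]
    (u v : A →ₗ[F] (K →ₗ[F] K))
    (hbim : ∀ a : A, IsBimul F (u a) (v a))
    (hreg : ∀ a1 a2 : A, u a1 ∘ₗ v a2 = v a2 ∘ₗ u a1)
    (h : A →ₗ[F] A →ₗ[F] K)
    (hhind : ∀ (a1 a2 : A) (k : K),
      u a1 (u a2 k) - u (a1 * a2) k = h a1 a2 * k ∧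
      v a2 (v a1 k) - v (a1 * a2) k = k * h a1 a2)
    (hf : ∀ a1 a2 a3 : A,
      u a1 (h a2 a3) - h (a1 * a2) a3 + h a1 (a2 * a3) - v a3 (h a1 a2) = 0) :
    let mulE : A × K → A × K → A × K := fun p q =>
      (p.1 * q.1, u p.1 q.2 + v q.1 p.2 + p.2 * q.2 + h p.1 q.1)
    ∀ x y z : A × K, mulE (mulE x y) z = mulE x (mulE y z) := by
  intro mulE x y z
  obtain ⟨x1, x2⟩ := x
  obtain ⟨y1, y2⟩ := y
  obtain ⟨z1, z2⟩ := z
  simp only [mulE]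
  refine Prod.ext (mul_assoc _ _ _) ?_
  simp only [map_add, add_mul, mul_add]
  have e1 : u (x1 * y1) z2 = u x1 (u y1 z2) - h x1 y1 * z2 := by
    have := (hhind x1 y1 z2).1
    rw [sub_eq_iff_eq_add] at this
    rw [this]; abel
  have e2 : v z1 (u x1 y2) = u x1 (v z1 y2) :=
    (LinearMap.congr_fun (hreg x1 z1) y2).symm
  have e3 : v z1 (v y1 x2) = v (y1 * z1) x2 + x2 * h y1 z1 := by
    have := (hhind y1 z1 x2).2
    rw [sub_eq_iff_eq_add] at this
    rw [this]; abel
  have e4 : v z1 (x2 * y2) = x2 * v z1 y2 := (hbim z1).2.2 x2 y2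
  have e6 : u x1 y2 * z2 = u x1 (y2 * z2) := ((hbim x1).2.1 y2 z2).symm
  have e7 : v y1 x2 * z2 = x2 * u y1 z2 := ((hbim y1).1 x2 z2).symm
  have e9 : h (x1 * y1) z1 = u x1 (h y1 z1) + h x1 (y1 * z1) - v z1 (h x1 y1) := by
    rw [← sub_eq_zero,
      show h (x1 * y1) z1 - (u x1 (h y1 z1) + h x1 (y1 * z1) - v z1 (h x1 y1)) =
        -(u x1 (h y1 z1) - h (x1 * y1) z1 + h x1 (y1 * z1) - v z1 (h x1 y1)) from by abel,
      hf, neg_zero]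
  rw [e1, e2, e3, e4, e6, e7, e9, mul_assoc x2 y2 z2]
  abel
end

section
/- In the bimodule extension E = (A⊗A) ⊕ Q determined by a 3-cocycle f ∈ Z³(A,Q), the 2-cochain h_E(a1⊗a2) := (a1⊗a2, 0) ∈ E satisfies δ_E h_E = f, i.e., a·h_E(a1⊗a2) − h_E(aa1⊗a2) + h_E(a⊗a1a2) − h_E(a⊗a1)·a2 = (0, f(a⊗a1⊗a2)); hence f becomes a coboundary in C²(A, E). -/
open TensorProduct

section

variable (F A Q : Type*) [Field F] [Ring A] [Algebra F A]
  [AddCommGroup Q] [Module F Q]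

/-- The left action of `a` on `A ⊗ A`: `a₀·(a₁⊗a₂) = a₀a₁⊗a₂ − a₀⊗a₁a₂`. -/
noncomputable def tensorLeftAction (a : A) : A ⊗[F] A →ₗ[F] A ⊗[F] A :=
  TensorProduct.map (LinearMap.mulLeft F a) LinearMap.id -
    (TensorProduct.mk F A A a) ∘ₗ (LinearMap.mul' F A)

variable {F A Q} in
/-- The extension of a bilinear map `A → A → Q` to `A ⊗ A → Q`. -/
noncomputable def tensorExt (g : A →ₗ[F] A →ₗ[F] Q) : A ⊗[F] A →ₗ[F] Q :=
  TensorProduct.lift g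

end

/-- In the bimodule extension `E = (A⊗A) ⊕ Q` determined by a 3-cocycle
`f ∈ Z³(A,Q)` (with `a·(p,q) = (a·p, f(a⊗p)+a·q)`, `(p,q)·a = (p·a, q·a)`,
trivial right action on `A⊗A`), the 2-cochain `h_E(a₁⊗a₂) := (a₁⊗a₂, 0)`
satisfies `δ_E h_E = f`:
`a·h_E(a₁⊗a₂) − h_E(aa₁⊗a₂) + h_E(a⊗a₁a₂) − h_E(a⊗a₁)·a₂ = (0, f(a⊗a₁⊗a₂))`;
hence `f` becomes a coboundary in `C²(A, E)`. -/
theorem cocycle_becomes_coboundary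
    (F A Q : Type*) [Field F] [Ring A] [Algebra F A]
    [AddCommGroup Q] [Module F Q]
    (l r : A →ₗ[F] Module.End F Q)
    (hl : ∀ a b : A, l (a * b) = l a ∘ₗ l b)
    (hr : ∀ a b : A, r (a * b) = r b ∘ₗ r a)
    (hlr : ∀ a b : A, l a ∘ₗ r b = r b ∘ₗ l a)
    (f : A →ₗ[F] A →ₗ[F] A →ₗ[F] Q)
    (hf : ∀ a1 a2 a3 a4 : A,
      l a1 (f a2 a3 a4) - f (a1 * a2) a3 a4 + f a1 (a2 * a3) a4
        - f a1 a2 (a3 * a4) + r a4 (f a1 a2 a3) = 0) :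
    let E := (A ⊗[F] A) × Q
    let LE : A → E → E := fun a e =>
      (tensorLeftAction F A a e.1, tensorExt (f a) e.1 + l a e.2)
    let RE : A → E → E := fun a e => (0, r a e.2)
    let hE : A → A → E := fun a1 a2 => ((a1 ⊗ₜ[F] a2 : A ⊗[F] A), 0)
    ∀ a a1 a2 : A,
      LE a (hE a1 a2) - hE (a * a1) a2 + hE a (a1 * a2) - RE a2 (hE a a1) =
        ((0 : A ⊗[F] A), f a a1 a2) := by
  intro E LE RE hE a a1 a2
  simp only [LE, RE, hE, tensorLeftAction, tensorExt, Prod.ext_iff, Prod.fst_sub,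
    Prod.snd_sub, Prod.fst_add, Prod.snd_add, LinearMap.sub_apply, LinearMap.coe_comp,
    Function.comp_apply, TensorProduct.map_tmul, LinearMap.mulLeft_apply, LinearMap.id_coe,
    id_eq, LinearMap.mul'_apply, TensorProduct.mk_apply, TensorProduct.lift.tmul, map_zero]
  rw [Prod.mk_sub_mk, Prod.mk_sub_mk, Prod.mk_add_mk, Prod.mk.injEq]
  constructor
  · abel
  · simp
end
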